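/- arXiv:2005.13805 — 4 statements merged into one kernel-verified Lean document; each statement's English description precedes it below -/
import Mathlib

section
/- Let K be a continuous nonnegative kernel function, symmetric about 0, with ∫_{−∞}^{∞} K(x) dx = 1 and finite first absolute moment ∫_{−∞}^{∞} |x| K(x) dx < ∞. Then ∫_{−∞}^{∞} x V(x) K(x) dx = −(1/2) ∫_{−∞}^{∞} V(x) W(x) dx. -/
/-!
Since `V' = -K` and `W' = K`, the product rule gives `(x V W)' = V W + x K (V - W)`. The first
moment makes `x V(x) → 0` at `+∞` and `x W(x) → 0` at `-∞`, and makes `V W` integrable (Fubini: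
`∫₀^∞ V = ∫ z⁺ K(z) dz`), so integrating over the line gives `∫ V W = ∫ x W K - ∫ x V K`.
Symmetry of `K` gives `W(x) = V(-x)`, hence `∫ x W K = -∫ x V K`.
-/

open MeasureTheory

/-- `V x = ∫_x^∞ K(z) dz`. -/
noncomputable def kerV (K : ℝ → ℝ) (x : ℝ) : ℝ := ∫ z in Set.Ioi x, K z

/-- `W x = ∫_{-∞}^x K(z) dz`. -/
noncomputable def kerW (K : ℝ → ℝ) (x : ℝ) : ℝ := ∫ z in Set.Iic x, K z

open Set Filter Topology

theorem tendsto_setIntegral_Ioi_atTop {E : Type*} [NormedAddCommGroup E] [NormedSpace ℝ E]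
    {g : ℝ → E} (hg : Integrable g) : Tendsto (fun x => ∫ z in Ioi x, g z) atTop (𝓝 0) := by
  have hempty : ⋂ x : ℝ, Ioi x = ∅ :=
    eq_empty_of_forall_notMem fun z hz => lt_irrefl z (mem_iInter.1 hz z)
  simpa [hempty] using
    tendsto_setIntegral_of_antitone (fun _ => measurableSet_Ioi) antitone_Ioi ⟨0, hg.integrableOn⟩

section Kernel

variable {K : ℝ → ℝ}

theorem Continuous.integrable_of_integrable_abs_mul (hc : Continuous K)
    (hm : Integrable fun x => |x| * K x) : Integrable K := by
  have hout : IntegrableOn K (Icc (-1) 1)ᶜ := by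
    refine Integrable.mono hm.integrableOn hc.aestronglyMeasurable.restrict <|
      ae_restrict_of_forall_mem measurableSet_Icc.compl fun x hx => ?_
    have hx : 1 ≤ |x| := le_of_lt <| not_le.1 fun h => hx (abs_le.1 h)
    simp only [norm_mul, Real.norm_eq_abs, abs_abs]
    exact le_mul_of_one_le_left (abs_nonneg _) hx
  have := (hc.integrableOn_Icc (a := -1) (b := 1)).union hout
  rwa [union_compl_self, integrableOn_univ] at this

theorem integrable_abs_mul_comp_neg (hm : Integrable fun x => |x| * K x) :
    Integrable fun x => |x| * K (-x) := by
  simpa using hm.comp_neg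

theorem integrable_id_mul_mul (hmeas : Measurable K) (hm : Integrable fun x => |x| * K x)
    {g : ℝ → ℝ} (hg : AEStronglyMeasurable g) {C : ℝ} (hC : ∀ x, ‖g x‖ ≤ C) :
    Integrable fun x => x * g x * K x := by
  have hxK : Integrable fun x => x * K x :=
    hm.mono (measurable_id.mul hmeas).aestronglyMeasurable <| ae_of_all _ fun x => by simp
  exact (hxK.bdd_mul hg (ae_of_all _ hC)).congr (ae_of_all _ fun x => by ring)

theorem kerV_add_kerW (hK : Integrable K) (x : ℝ) : kerV K x + kerW K x = ∫ z, K z := by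
  rw [add_comm]
  exact intervalIntegral.integral_Iic_add_Ioi hK.integrableOn hK.integrableOn

theorem kerW_eq_kerV_comp_neg (x : ℝ) : kerW K x = kerV (fun z => K (-z)) (-x) := by
  rw [kerV, integral_comp_neg_Ioi, neg_neg, kerW]

theorem kerW_eq_kerV_neg (heven : ∀ x, K (-x) = K x) (x : ℝ) : kerW K x = kerV K (-x) := by
  simp only [kerW_eq_kerV_comp_neg, heven]

theorem hasDerivAt_kerW (hc : Continuous K) (hK : Integrable K) (x : ℝ) :
    HasDerivAt (kerW K) (K x) x := by
  have hW : kerW K = fun y => kerW K 0 + ∫ z in (0 : ℝ)..y, K z := funext fun y => by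
    rw [← intervalIntegral.integral_Iic_sub_Iic hK.integrableOn hK.integrableOn, kerW, kerW]
    ring
  rw [hW]
  exact (hc.integral_hasStrictDerivAt 0 x).hasDerivAt.const_add _

theorem hasDerivAt_kerV (hc : Continuous K) (hK : Integrable K) (x : ℝ) :
    HasDerivAt (kerV K) (-K x) x := by
  have hV : kerV K = fun y => (∫ z, K z) - kerW K y :=
    funext fun y => eq_sub_of_add_eq (kerV_add_kerW hK y)
  rw [hV]
  exact (hasDerivAt_kerW hc hK x).const_sub _

theorem continuous_kerV (hc : Continuous K) (hK : Integrable K) : Continuous (kerV K) :=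
  continuous_iff_continuousAt.2 fun x => (hasDerivAt_kerV hc hK x).continuousAt

theorem continuous_kerW (hc : Continuous K) (hK : Integrable K) : Continuous (kerW K) :=
  continuous_iff_continuousAt.2 fun x => (hasDerivAt_kerW hc hK x).continuousAt

theorem norm_kerV_le (hK : Integrable K) (x : ℝ) : ‖kerV K x‖ ≤ ∫ z, ‖K z‖ :=
  (norm_integral_le_integral_norm _).trans <|
    setIntegral_le_integral hK.norm (ae_of_all _ fun _ => norm_nonneg _)

theorem norm_kerW_le (hK : Integrable K) (x : ℝ) : ‖kerW K x‖ ≤ ∫ z, ‖K z‖ :=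
  (norm_integral_le_integral_norm _).trans <|
    setIntegral_le_integral hK.norm (ae_of_all _ fun _ => norm_nonneg _)

theorem tendsto_mul_kerV_atTop (hm : Integrable fun x => |x| * K x) :
    Tendsto (fun x => x * kerV K x) atTop (𝓝 0) := by
  refine squeeze_zero_norm' ?_ (tendsto_setIntegral_Ioi_atTop hm.norm)
  filter_upwards [eventually_ge_atTop 0] with x hx
  rw [kerV, ← integral_const_mul]
  refine norm_integral_le_of_norm_le hm.norm.integrableOn <|
    ae_restrict_of_forall_mem measurableSet_Ioi fun z hz => ?_
  simp only [norm_mul, Real.norm_eq_abs, abs_abs]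
  gcongr
  exact hz.le

theorem tendsto_mul_kerW_atBot (hm : Integrable fun x => |x| * K x) :
    Tendsto (fun x => x * kerW K x) atBot (𝓝 0) := by
  have := ((tendsto_mul_kerV_atTop (integrable_abs_mul_comp_neg hm)).comp
    tendsto_neg_atBot_atTop).neg
  simpa [Function.comp_def, kerW_eq_kerV_comp_neg] using this

theorem integrableOn_kerV_Ioi (hmeas : Measurable K) (hm : Integrable fun x => |x| * K x) :
    IntegrableOn (kerV K) (Ioi 0) := by
  set μ : Measure ℝ := volume.restrict (Ioi 0)
  set F : ℝ × ℝ → ℝ := {p : ℝ × ℝ | p.1 < p.2}.indicator fun p => K p.2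
  have hF_slice (x y : ℝ) : F (x, y) = (Iio y).indicator (fun _ => K y) x := by
    simp [F, indicator_apply]
  have hF_meas : AEStronglyMeasurable F (μ.prod volume) :=
    ((hmeas.comp measurable_snd).indicator
      (measurableSet_lt measurable_fst measurable_snd)).aestronglyMeasurable
  have hμ (y : ℝ) : μ (Iio y) < ⊤ := by
    rw [Measure.restrict_apply measurableSet_Iio, Iio_inter_Ioi]
    exact measure_Ioo_lt_top
  have hF_norm (y : ℝ) : ∫ x, ‖F (x, y)‖ ∂μ = max y 0 * ‖K y‖ := by
    simp_rw [hF_slice, norm_indicator_eq_indicator_norm]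
    rw [integral_indicator measurableSet_Iio, Measure.restrict_restrict measurableSet_Iio,
      Iio_inter_Ioi, setIntegral_const, smul_eq_mul, Real.volume_real_Ioo, sub_zero]
  have hF_int : Integrable F (μ.prod volume) := by
    refine (integrable_prod_iff' hF_meas).2 ⟨ae_of_all _ fun y => ?_, ?_⟩
    · simp_rw [hF_slice]
      exact (integrableOn_const (hμ y).ne).integrable_indicator measurableSet_Iio
    · simp_rw [hF_norm]
      refine hm.mono ((continuous_id.max continuous_const).measurable.mul
        hmeas.norm).aestronglyMeasurable (ae_of_all _ fun y => ?_)
      simp only [norm_mul, Real.norm_eq_abs, abs_abs]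
      exact mul_le_mul_of_nonneg_right ((abs_of_nonneg (le_max_right y 0)).trans_le
        (max_le (le_abs_self y) (abs_nonneg y))) (abs_nonneg _)
  refine hF_int.integral_prod_left.congr (ae_of_all _ fun x => ?_)
  simp [F, kerV, ← integral_indicator measurableSet_Ioi, indicator_apply]

theorem integrableOn_kerW_Iio (hmeas : Measurable K) (hm : Integrable fun x => |x| * K x) :
    IntegrableOn (kerW K) (Iio 0) := by
  have hV := integrableOn_kerV_Ioi (hmeas.comp measurable_neg) (integrable_abs_mul_comp_neg hm)
  have := hV.comp_neg
  rw [neg_Ioi, neg_zero] at this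
  exact this.congr_fun (fun x _ => (kerW_eq_kerV_comp_neg x).symm) measurableSet_Iio

theorem integrable_kerV_mul_kerW (hc : Continuous K) (hm : Integrable fun x => |x| * K x) :
    Integrable fun x => kerV K x * kerW K x := by
  have hK := hc.integrable_of_integrable_abs_mul hm
  have hIio : IntegrableOn (fun x => kerV K x * kerW K x) (Iio 0) :=
    (integrableOn_kerW_Iio hc.measurable hm).bdd_mul
      (continuous_kerV hc hK).aestronglyMeasurable (ae_of_all _ (norm_kerV_le hK))
  have hIci : IntegrableOn (fun x => kerV K x * kerW K x) (Ici 0) := by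
    rw [integrableOn_Ici_iff_integrableOn_Ioi]
    exact (integrableOn_kerV_Ioi hc.measurable hm).mul_bdd
      (continuous_kerW hc hK).aestronglyMeasurable (ae_of_all _ (norm_kerW_le hK))
  simpa using hIio.union hIci

theorem integral_kerV_mul_kerW (hc : Continuous K) (hm : Integrable fun x => |x| * K x) :
    ∫ x, kerV K x * kerW K x = (∫ x, x * kerW K x * K x) - ∫ x, x * kerV K x * K x := by
  have hK := hc.integrable_of_integrable_abs_mul hm
  have hVW := integrable_kerV_mul_kerW hc hm
  have hxVK := integrable_id_mul_mul hc.measurable hm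
    (continuous_kerV hc hK).aestronglyMeasurable (norm_kerV_le hK)
  have hxWK := integrable_id_mul_mul hc.measurable hm
    (continuous_kerW hc hK).aestronglyMeasurable (norm_kerW_le hK)
  have hderiv (x : ℝ) : HasDerivAt (fun x => x * kerV K x * kerW K x)
      (kerV K x * kerW K x + (x * kerV K x * K x - x * kerW K x * K x)) x := by
    refine (((hasDerivAt_id' x).mul (hasDerivAt_kerV hc hK x)).mul
      (hasDerivAt_kerW hc hK x)).congr_deriv ?_
    simp only [Pi.mul_apply]
    ring
  have hbot : Tendsto (fun x => x * kerV K x * kerW K x) atBot (𝓝 0) :=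
    ((tendsto_mul_kerW_atBot hm).zero_mul_isBoundedUnder_le
      (isBoundedUnder_of ⟨_, norm_kerV_le hK⟩)).congr fun x => by ring
  have htop : Tendsto (fun x => x * kerV K x * kerW K x) atTop (𝓝 0) :=
    (tendsto_mul_kerV_atTop hm).zero_mul_isBoundedUnder_le
      (isBoundedUnder_of ⟨_, norm_kerW_le hK⟩)
  have hxVWK : Integrable fun x => x * kerV K x * K x - x * kerW K x * K x := hxVK.sub hxWK
  have hFTC := integral_of_hasDerivAt_of_tendsto hderiv (hVW.add hxVWK) hbot htop
  rw [integral_add hVW hxVWK, integral_sub hxVK hxWK, sub_zero] at hFTC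
  linarith

theorem integral_id_mul_kerW_mul_of_even (heven : ∀ x, K (-x) = K x) :
    ∫ x, x * kerW K x * K x = -∫ x, x * kerV K x * K x := by
  rw [← integral_neg_eq_self, ← integral_neg]
  congr 1 with x
  rw [kerW_eq_kerV_neg heven, neg_neg, heven]
  ring

end Kernel

theorem integral_id_mul_kerV_mul_kernel_general
    (K : ℝ → ℝ) (hK_cont : Continuous K)
    (hK_symm : ∀ x, K (-x) = K x)
    (hK_mom1 : Integrable (fun x => |x| * K x)) :
    (∫ x, x * kerV K x * K x) = -(1 / 2) * ∫ x, kerV K x * kerW K x := by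
  rw [integral_kerV_mul_kerW hK_cont hK_mom1, integral_id_mul_kerW_mul_of_even hK_symm]
  ring

/-- If `K` is a continuous nonnegative kernel, symmetric about `0`, with `∫ K = 1`
and finite first absolute moment, then
`∫ x V(x) K(x) dx = -(1/2) ∫ V(x) W(x) dx`. -/
theorem integral_id_mul_kerV_mul_kernel
    (K : ℝ → ℝ) (hK_cont : Continuous K) (hK_nonneg : ∀ x, 0 ≤ K x)
    (hK_symm : ∀ x, K (-x) = K x) (hK_one : (∫ x, K x) = 1)
    (hK_mom1 : Integrable (fun x => |x| * K x)) :
    (∫ x, x * kerV K x * K x) = -(1 / 2) * ∫ x, kerV K x * kerW K x :=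
  integral_id_mul_kerV_mul_kernel_general K hK_cont hK_symm hK_mom1
end

section
/- Let X be an absolutely continuous real random variable supported on Ω with E(X) and E(X²) finite, let g : ℝ → Ω be a continuously differentiable, strictly increasing bijection, let S_Y be the survival function of Y = g⁻¹(X), and define a(t) = ∫_t^{∞} g′(y) S_Y(y) dy and A(t) = ∫_t^{∞} g′(y) a(y) dy. Then A(g⁻¹(t)) = 𝕊̄_X(t) for every t ∈ Ω, where 𝕊̄_X(t) = ∫_t^{∞} 𝕊_X(x) dx and 𝕊_X(t) = ∫_t^{∞} S_X(x) dx. -/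
open MeasureTheory

/-- The survival function of `X`: `S_X(t) = P(X > t)`. -/
noncomputable def survival {α : Type*} [MeasurableSpace α] (μ : Measure α)
    (X : α → ℝ) (t : ℝ) : ℝ := (μ {ω | t < X ω}).toReal

/-- The cumulative survival function of `X`: `𝕊_X(t) = ∫_t^∞ S_X(x) dx`. -/
noncomputable def cumSurvival {α : Type*} [MeasurableSpace α] (μ : Measure α)
    (X : α → ℝ) (t : ℝ) : ℝ := ∫ x in Set.Ioi t, survival μ X x

/-- `𝕊̄_X(t) = ∫_t^∞ 𝕊_X(x) dx`. -/
noncomputable def cumCumSurvival {α : Type*} [MeasurableSpace α] (μ : Measure α)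
    (X : α → ℝ) (t : ℝ) : ℝ := ∫ x in Set.Ioi t, cumSurvival μ X x

/-!
Since `g` is increasing, `gInv X > z ↔ X > g z`, so `S_Y = S_X ∘ g`. The substitution `x = g y`
then turns `a(y)` into `𝕊_X(g y)` and `A(gInv t)` into `𝕊̄_X(t)`. The substitution maps `(y, ∞)`
onto `(g y, ∞) ∩ Ω` only; the missing part lies above `Ω`, where `S_X` and `𝕊_X` vanish.
-/

open Set

lemma Set.OrdConnected.le_of_notMem {Ω : Set ℝ} (hΩ : OrdConnected Ω) {c x y : ℝ}
    (hc : c ∈ Ω) (hcx : c ≤ x) (hx : x ∉ Ω) (hy : y ∈ Ω) : y ≤ x := by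
  by_contra! hxy
  exact hx (hΩ.out hc hy ⟨hcx, hxy.le⟩)

lemma StrictMono.image_Ioi_eq_inter_range {g : ℝ → ℝ} (hg : StrictMono g) (a : ℝ) :
    g '' Ioi a = Ioi (g a) ∩ range g := by
  have hpre : g ⁻¹' Ioi (g a) = Ioi a := ext fun _ ↦ hg.lt_iff_lt
  rw [← hpre, image_preimage_eq_inter_range]

/-- No integrability is needed: the two sides are integrable or not together. -/
lemma StrictMono.integral_Ioi_deriv_mul_comp {g : ℝ → ℝ} (hg : StrictMono g)
    (hg' : Differentiable ℝ g) {f : ℝ → ℝ} {a : ℝ}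
    (hf : ∀ x ∈ Ioi (g a), x ∉ range g → f x = 0) :
    ∫ y in Ioi a, deriv g y * f (g y) = ∫ x in Ioi (g a), f x := by
  have hcov := integral_image_eq_integral_abs_deriv_smul (measurableSet_Ioi (a := a))
    (fun y _ ↦ (hg' y).hasDerivAt.hasDerivWithinAt) hg.injective.injOn f
  simp only [abs_of_nonneg hg.monotone.deriv_nonneg, smul_eq_mul] at hcov
  rw [← hcov, hg.image_Ioi_eq_inter_range, setIntegral_eq_of_subset_of_forall_sdiff_eq_zero
    measurableSet_Ioi inter_subset_left fun x hx ↦ hf x hx.1 fun h ↦ hx.2 ⟨hx.1, h⟩]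

section Survival

variable {α : Type*} [MeasurableSpace α] {μ : Measure α} {X : α → ℝ}

lemma survival_eq_zero_of_ae_le {x : ℝ} (h : ∀ᵐ ω ∂μ, X ω ≤ x) : survival μ X x = 0 := by
  have hnull : μ {ω | x < X ω} = 0 := by
    simpa only [ae_iff, not_le] using h
  simp [survival, hnull]

lemma cumSurvival_eq_zero_of_ae_le {x : ℝ} (h : ∀ᵐ ω ∂μ, X ω ≤ x) : cumSurvival μ X x = 0 := by
  refine setIntegral_eq_zero_of_forall_eq_zero fun z hz ↦ survival_eq_zero_of_ae_le ?_
  filter_upwards [h] with ω hω using hω.trans hz.le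

lemma ae_le_of_ae_mem_ordConnected {Ω : Set ℝ} (hΩ : OrdConnected Ω) (hXΩ : ∀ᵐ ω ∂μ, X ω ∈ Ω)
    {c x : ℝ} (hc : c ∈ Ω) (hcx : c ≤ x) (hx : x ∉ Ω) : ∀ᵐ ω ∂μ, X ω ≤ x := by
  filter_upwards [hXΩ] with ω hω using hΩ.le_of_notMem hc hcx hx hω

lemma survival_comp_of_strictMono {g gInv : ℝ → ℝ} (hg : StrictMono g)
    (hX : ∀ᵐ ω ∂μ, g (gInv (X ω)) = X ω) (z : ℝ) :
    survival μ (fun ω ↦ gInv (X ω)) z = survival μ X (g z) := by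
  unfold survival
  congr 1
  refine measure_congr (Filter.eventuallyEq_set.mpr ?_)
  filter_upwards [hX] with ω hω
  rw [← hg.lt_iff_lt, hω]

end Survival

theorem cumCumSurvival_of_inverse_transform_general
    {α : Type*} [MeasurableSpace α] (μ : Measure α)
    (Ω : Set ℝ) (hΩ : Set.OrdConnected Ω)
    (g gInv : ℝ → ℝ)
    (hg_smooth : ContDiff ℝ 1 g) (hg_mono : StrictMono g)
    (hg_range : Set.range g = Ω)
    (hgInv_right : ∀ t ∈ Ω, g (gInv t) = t)
    (X : α → ℝ) (hXΩ : ∀ᵐ ω ∂μ, X ω ∈ Ω) :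
    ∀ t ∈ Ω,
      (∫ y in Set.Ioi (gInv t),
          deriv g y *
            ∫ z in Set.Ioi y, deriv g z * survival μ (fun ω => gInv (X ω)) z) =
        cumCumSurvival μ X t := by
  intro t ht
  have hg_diff : Differentiable ℝ g := hg_smooth.differentiable one_ne_zero
  have hX_le : ∀ y, ∀ x ∈ Ioi (g y), x ∉ range g → ∀ᵐ ω ∂μ, X ω ≤ x := fun y x hx hxg ↦
    ae_le_of_ae_mem_ordConnected hΩ hXΩ (hg_range ▸ mem_range_self y) hx.le (hg_range ▸ hxg)
  have hSY : ∀ z, survival μ (fun ω ↦ gInv (X ω)) z = survival μ X (g z) :=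
    survival_comp_of_strictMono hg_mono (by filter_upwards [hXΩ] with ω hω using hgInv_right _ hω)
  have hinner : ∀ y, ∫ z in Ioi y, deriv g z * survival μ (fun ω ↦ gInv (X ω)) z =
      cumSurvival μ X (g y) := fun y ↦ by
    simp only [hSY]
    exact hg_mono.integral_Ioi_deriv_mul_comp hg_diff fun x hx hxg ↦
      survival_eq_zero_of_ae_le (hX_le y x hx hxg)
  simp only [hinner]
  rw [hg_mono.integral_Ioi_deriv_mul_comp hg_diff fun x hx hxg ↦
    cumSurvival_eq_zero_of_ae_le (hX_le _ x hx hxg), hgInv_right t ht]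
  rfl

/-- Change-of-variable property of `𝕊̄_X`: if `X` is supported on `Ω = range g`
with `E(X)` and `E(X²)` finite, `g : ℝ → Ω` is a continuously differentiable,
strictly increasing bijection with inverse `gInv`, `S_Y` is the survival function
of `Y = g⁻¹(X)`, `a(t) = ∫_t^∞ g′(y) S_Y(y) dy` and
`A(t) = ∫_t^∞ g′(y) a(y) dy`, then `A(g⁻¹ t) = 𝕊̄_X(t)` for every `t ∈ Ω`. -/
theorem cumCumSurvival_of_inverse_transform
    {α : Type*} [MeasurableSpace α] (μ : Measure α) [IsProbabilityMeasure μ]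
    (Ω : Set ℝ) (hΩ : Set.OrdConnected Ω)
    (g gInv fX : ℝ → ℝ)
    (hg_smooth : ContDiff ℝ 1 g) (hg_mono : StrictMono g)
    (hg_range : Set.range g = Ω)
    (hgInv_left : Function.LeftInverse gInv g)
    (hgInv_right : ∀ t ∈ Ω, g (gInv t) = t)
    (X : α → ℝ) (hX : Measurable X) (hXΩ : ∀ᵐ ω ∂μ, X ω ∈ Ω)
    (hfX_meas : Measurable fX) (hfX_nonneg : ∀ x, 0 ≤ fX x)
    (hdens : μ.map X = volume.withDensity (fun x => ENNReal.ofReal (fX x)))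
    (hM1 : Integrable X μ) (hM2 : Integrable (fun ω => (X ω) ^ 2) μ) :
    ∀ t ∈ Ω,
      (∫ y in Set.Ioi (gInv t),
          deriv g y *
            ∫ z in Set.Ioi y, deriv g z * survival μ (fun ω => gInv (X ω)) z) =
        cumCumSurvival μ X t :=
  cumCumSurvival_of_inverse_transform_general μ Ω hΩ g gInv hg_smooth hg_mono hg_range hgInv_right X
    hXΩ
end

section
/- Fix t ∈ Ω. Under conditions C1–C6, the expectation of the first proposed survival function estimator, E[S̃_{X,1}(t)] = E[(1/h) ∫_{g⁻¹(t)}^{∞} K((z − g⁻¹(X))/h) dz], satisfies, as h → 0⁺: E[S̃_{X,1}(t)] − S_X(t) = −(h²/2) b₁(t) ∫_{−∞}^{∞} y² K(y) dy + o(h²), where b₁(t) = g″(g⁻¹(t)) f_X(t) + (g′(g⁻¹(t)))² f_X′(t). -/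
open MeasureTheory Filter Asymptotics

/-!
Substituting `u = (z - Y) / h` and swapping integrals (Tonelli) turns the expected estimator into
the kernel smoothing `∫ K(u) S_Y(y₀ - h u) du` of the survival function `S_Y` of `Y = g⁻¹(X)` at
`y₀ = g⁻¹(t)`, where `S_Y(y₀) = S_X(t)`, `S_Y' = -f_Y` and `f_Y'(y₀) = b₁(t)`. Expanding `S_Y` to
second order around `y₀`, the constant term gives `S_X(t)` because `∫ K = 1`, the linear term
vanishes because `K` is even, and the quadratic term gives `-(h²/2) b₁(t) ∫ u² K(u) du`. The
remainder `φ` is `o(s²)` and, since `S_Y` is bounded, `O(1 + s²)`, so `|φ(s)| ≤ C s²` for all `s`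
and dominated convergence shows `∫ K(u) φ(hu) du = h² ∫ u² K(u) (φ(hu) / (hu)²) du = o(h²)`.
-/

open Set Topology

section KernelSmoothing

variable {K φ : ℝ → ℝ}

theorem exists_abs_le_mul_sq_of_isLittleO (hφ : φ =o[𝓝 0] (· ^ 2))
    (hgrowth : ∃ A, ∀ s, |φ s| ≤ A * (1 + s ^ 2)) : ∃ C, ∀ s, |φ s| ≤ C * s ^ 2 := by
  obtain ⟨A, hA⟩ := hgrowth
  obtain ⟨δ, hδ, hnear⟩ := Metric.eventually_nhds_iff.mp (hφ.bound one_pos)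
  have hA0 : 0 ≤ A := by simpa using (abs_nonneg _).trans (hA 0)
  refine ⟨max 1 (A * (δ⁻¹ ^ 2 + 1)), fun s => ?_⟩
  rcases lt_or_ge |s| δ with hs | hs
  · have hφs : |φ s| ≤ s ^ 2 := by simpa using hnear (by simpa using hs)
    exact hφs.trans (le_mul_of_one_le_left (sq_nonneg s) (le_max_left _ _))
  · have hone : 1 ≤ δ⁻¹ ^ 2 * s ^ 2 := by
      rw [← mul_pow, one_le_sq_iff_one_le_abs, abs_mul, abs_inv, abs_of_pos hδ]
      exact (one_le_inv_mul₀ hδ).mpr hs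
    calc |φ s| ≤ A * (1 + s ^ 2) := hA s
      _ ≤ A * (δ⁻¹ ^ 2 + 1) * s ^ 2 := by nlinarith
      _ ≤ max 1 (A * (δ⁻¹ ^ 2 + 1)) * s ^ 2 := by gcongr; exact le_max_right _ _

theorem isLittleO_integral_mul_comp_mul (hK : Integrable fun u => u ^ 2 * K u)
    (hφm : Measurable φ) (hφ : φ =o[𝓝 0] (· ^ 2)) (hgrowth : ∃ A, ∀ s, |φ s| ≤ A * (1 + s ^ 2)) :
    (fun h => ∫ u, K u * φ (h * u)) =o[𝓝 0] (· ^ 2) := by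
  obtain ⟨C, hC⟩ := exists_abs_le_mul_sq_of_isLittleO hφ hgrowth
  set r : ℝ → ℝ := fun s => φ s / s ^ 2 with hr
  have hφ0 : φ 0 = 0 := abs_nonpos_iff.mp (by simpa using hC 0)
  have hC0 : 0 ≤ C := by simpa using (abs_nonneg _).trans (hC 1)
  have hrm : Measurable r := hφm.div (measurable_id.pow_const 2)
  have hr_bdd : ∀ s, ‖r s‖ ≤ C := by
    intro s
    rcases eq_or_ne s 0 with rfl | hs
    · simpa [hr] using hC0
    · rw [Real.norm_eq_abs, hr, abs_div, abs_of_nonneg (sq_nonneg s)]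
      exact div_le_of_le_mul₀ (sq_nonneg s) hC0 (hC s)
  have hfactor : ∀ h u, K u * φ (h * u) = h ^ 2 * (u ^ 2 * K u * r (h * u)) := by
    intro h u
    rcases eq_or_ne (h * u) 0 with hz | hz
    · simp [hr, hz, hφ0]
    · rw [hr]
      field_simp
      rw [eq_div_iff hz]
      ring
  have hlim : Tendsto (fun h => ∫ u, u ^ 2 * K u * r (h * u)) (𝓝 0) (𝓝 0) := by
    have hr0 : Tendsto r (𝓝 0) (𝓝 0) := hφ.tendsto_div_nhds_zero
    have := tendsto_integral_filter_of_dominated_convergence (fun u => ‖u ^ 2 * K u‖ * C)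
      (F := fun h u => u ^ 2 * K u * r (h * u))
      (Eventually.of_forall fun h => hK.aestronglyMeasurable.mul
        (hrm.comp (measurable_const_mul h)).aestronglyMeasurable)
      (Eventually.of_forall fun h => Eventually.of_forall fun u => by
        rw [norm_mul]; exact mul_le_mul_of_nonneg_left (hr_bdd _) (norm_nonneg _))
      (hK.norm.mul_const C)
      (Eventually.of_forall fun u => by
        simpa using (hr0.comp ((continuous_mul_const u).tendsto' 0 0 (zero_mul u))).const_mul
          (u ^ 2 * K u))
    rwa [integral_zero] at this
  simp_rw [hfactor, integral_const_mul]
  simpa using (isBigO_refl (fun h : ℝ => h ^ 2) (𝓝 0)).mul_isLittleO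
    ((isLittleO_one_iff ℝ).mpr hlim)

end KernelSmoothing

theorem taylor_two_isLittleO {f f' : ℝ → ℝ} {x₀ f'' : ℝ}
    (hf : ∀ x, HasDerivAt f (f' x) x) (hf' : HasDerivAt f' f'' x₀) :
    (fun x => f x - f x₀ - (x - x₀) * f' x₀ - (x - x₀) ^ 2 / 2 * f'')
      =o[𝓝 x₀] fun x => (x - x₀) ^ 2 := by
  have hR : ∀ x ∈ univ, HasDerivWithinAt
      (fun x => f x - (x - x₀) * f' x₀ - (x - x₀) ^ 2 / 2 * f'')
      (f' x - f' x₀ - (x - x₀) * f'') univ x := fun x _ =>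
    (((hf x).sub (((hasDerivAt_id' x).sub_const x₀).mul_const (f' x₀))).sub
      (((((hasDerivAt_id' x).sub_const x₀).pow 2).div_const 2).mul_const f'')).hasDerivWithinAt
      |>.congr_deriv (by simp)
  have hR' : (fun x => f' x - f' x₀ - (x - x₀) * f'') =o[𝓝[univ] x₀] fun x => (x - x₀) ^ 1 := by
    simpa [smul_eq_mul, mul_comm] using hasDerivAt_iff_isLittleO.mp hf'
  have h := convex_univ.isLittleO_pow_succ_real (mem_univ x₀) hR hR'
  rw [nhdsWithin_univ] at h
  exact h.congr_left fun x => by ring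

theorem integrable_id_mul_of_integrable_sq_mul {K : ℝ → ℝ} (hK : Integrable K)
    (hK_mom2 : Integrable fun u => u ^ 2 * K u) : Integrable fun u => u * K u := by
  refine (hK.norm.add hK_mom2.norm).mono' (by fun_prop) (Eventually.of_forall fun u => ?_)
  simp only [Pi.add_apply, norm_mul, norm_pow, Real.norm_eq_abs u, sq_abs]
  have hu : |u| ≤ 1 + u ^ 2 := by nlinarith [sq_abs u, sq_nonneg (|u| - 1)]
  nlinarith [mul_le_mul_of_nonneg_right hu (norm_nonneg (K u))]

theorem integral_id_mul_eq_zero_of_even {K : ℝ → ℝ} (hK_symm : ∀ u, K (-u) = K u) :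
    ∫ u, u * K u = 0 := by
  have h := integral_neg_eq_self (fun u => u * K u) volume
  simp only [hK_symm, neg_mul, integral_neg] at h
  linarith

theorem isLittleO_kernel_smoothing_bias {K ψ ψ' : ℝ → ℝ} {y₀ ψ'' : ℝ}
    (hK_one : ∫ u, K u = 1) (hK_symm : ∀ u, K (-u) = K u)
    (hK_mom2 : Integrable fun u => u ^ 2 * K u)
    (hψ : ∀ y, HasDerivAt ψ (ψ' y) y) (hψ' : HasDerivAt ψ' ψ'' y₀)
    (hψ_bdd : ∃ M, ∀ y, |ψ y| ≤ M) :
    (fun h => (∫ u, K u * ψ (y₀ - h * u)) - ψ y₀ - h ^ 2 / 2 * ψ'' * ∫ u, u ^ 2 * K u)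
      =o[𝓝 0] (· ^ 2) := by
  obtain ⟨M, hM⟩ := hψ_bdd
  have hK : Integrable K := .of_integral_ne_zero (by simp [hK_one])
  have hψ_cont : Continuous ψ := continuous_iff_continuousAt.mpr fun y => (hψ y).continuousAt
  set φ : ℝ → ℝ := fun s => ψ (y₀ - s) - ψ y₀ + s * ψ' y₀ - s ^ 2 / 2 * ψ'' with hφ
  have hφ_o : φ =o[𝓝 0] (· ^ 2) := by
    have hlim : Tendsto (fun s : ℝ => y₀ - s) (𝓝 0) (𝓝 y₀) :=
      (continuous_const.sub continuous_id).tendsto' 0 y₀ (sub_zero y₀)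
    exact ((taylor_two_isLittleO hψ hψ').comp_tendsto hlim).congr
      (fun s => by simp only [hφ, Function.comp]; ring)
      (fun s => by simp only [Function.comp]; ring)
  have hφ_growth : ∃ A, ∀ s, |φ s| ≤ A * (1 + s ^ 2) := by
    refine ⟨2 * M + |ψ' y₀| + |ψ''|, fun s => ?_⟩
    have hM0 : 0 ≤ M := (abs_nonneg _).trans (hM 0)
    have hs : |s| ≤ 1 + s ^ 2 := by nlinarith [sq_abs s, sq_nonneg (|s| - 1)]
    calc |φ s| ≤ |ψ (y₀ - s)| + |ψ y₀| + |s * ψ' y₀| + |s ^ 2 / 2 * ψ''| := by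
          simp only [hφ]
          linarith [abs_sub (ψ (y₀ - s) - ψ y₀ + s * ψ' y₀) (s ^ 2 / 2 * ψ''),
            abs_add_le (ψ (y₀ - s) - ψ y₀) (s * ψ' y₀), abs_sub (ψ (y₀ - s)) (ψ y₀)]
      _ = |ψ (y₀ - s)| + |ψ y₀| + |s| * |ψ' y₀| + s ^ 2 / 2 * |ψ''| := by
          rw [abs_mul, abs_mul, abs_div, abs_of_nonneg (sq_nonneg s), abs_two]
      _ ≤ (2 * M + |ψ' y₀| + |ψ''|) * (1 + s ^ 2) := by
          nlinarith [hM (y₀ - s), hM y₀, abs_nonneg (ψ' y₀), abs_nonneg ψ'', sq_nonneg s,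
            mul_le_mul_of_nonneg_right hs (abs_nonneg (ψ' y₀))]
  have hsplit : ∀ h, ∫ u, K u * φ (h * u)
      = (∫ u, K u * ψ (y₀ - h * u)) - ψ y₀ - h ^ 2 / 2 * ψ'' * ∫ u, u ^ 2 * K u := by
    intro h
    have hKψ : Integrable fun u => K u * ψ (y₀ - h * u) :=
      hK.mul_bdd (by fun_prop) (ae_of_all _ fun u => hM _)
    have hK1 := integrable_id_mul_of_integrable_sq_mul hK hK_mom2
    calc ∫ u, K u * φ (h * u)
        = ∫ u, (K u * ψ (y₀ - h * u) - ψ y₀ * K u + h * ψ' y₀ * (u * K u)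
            - h ^ 2 / 2 * ψ'' * (u ^ 2 * K u)) := by
          congr 1; ext u; simp only [hφ]; ring
      _ = _ := by
          rw [integral_sub, integral_add, integral_sub hKψ (hK.const_mul _), integral_const_mul,
            integral_const_mul, integral_const_mul, hK_one, integral_id_mul_eq_zero_of_even hK_symm]
          · ring
          · exact hKψ.sub (hK.const_mul _)
          · exact hK1.const_mul _
          · exact (hKψ.sub (hK.const_mul _)).add (hK1.const_mul _)
          · exact hK_mom2.const_mul _
  simp_rw [← hsplit]
  exact isLittleO_integral_mul_comp_mul hK_mom2 (by fun_prop) hφ_o hφ_growth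

theorem hasDerivAt_integral_Ioi {f : ℝ → ℝ} {r : ℝ} (hf : Integrable f) (hr : ContinuousAt f r) :
    HasDerivAt (fun s => ∫ x in Ioi s, f x) (-f r) r := by
  have hsplit : (fun s => ∫ x in Ioi s, f x) = fun s => (∫ x in Ioi r, f x) - ∫ x in r..s, f x := by
    ext s
    rw [← intervalIntegral.integral_interval_add_Ioi hf.integrableOn hf.integrableOn,
      intervalIntegral.integral_symm]
    ring
  rw [hsplit, ← zero_sub]
  exact (hasDerivAt_const r _).sub (intervalIntegral.integral_hasDerivAt_right hf.intervalIntegrable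
    hf.aestronglyMeasurable.stronglyMeasurableAtFilter hr)

theorem one_div_mul_integral_Ioi_comp_sub_div (K : ℝ → ℝ) {h : ℝ} (hh : 0 < h) (a c : ℝ) :
    1 / h * ∫ z in Ioi c, K ((z - a) / h) = kerV K ((c - a) / h) := by
  have hind : (Ioi c).indicator (fun z => K ((z - a) / h))
      = fun z => (Ioi ((c - a) / h)).indicator K ((z - a) / h) := by
    ext z
    simp [indicator_apply, div_lt_div_iff_of_pos_right hh]
  rw [← integral_indicator measurableSet_Ioi, hind,
    integral_sub_right_eq_self (fun z => (Ioi ((c - a) / h)).indicator K (z / h)) a,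
    Measure.integral_comp_div, integral_indicator measurableSet_Ioi, kerV, abs_of_pos hh,
    smul_eq_mul, ← mul_assoc, one_div_mul_cancel hh.ne', one_mul]

theorem integral_kerV_comp {α : Type*} [MeasurableSpace α] {μ : Measure α} [IsFiniteMeasure μ]
    {K : ℝ → ℝ} (hK : Integrable K) {a : α → ℝ} (ha : Measurable a) :
    ∫ ω, kerV K (a ω) ∂μ = ∫ u, K u * μ.real {ω | a ω < u} := by
  set S : Set (α × ℝ) := {p | a p.1 < p.2}
  have hS : MeasurableSet S := measurableSet_lt (ha.comp measurable_fst) measurable_snd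
  have hF : Integrable (Function.uncurry fun ω u => S.indicator (fun p => K p.2) (ω, u))
      (μ.prod volume) := (hK.comp_snd μ).indicator hS
  calc ∫ ω, kerV K (a ω) ∂μ = ∫ ω, ∫ u, S.indicator (fun p => K p.2) (ω, u) ∂volume ∂μ := by
        congr 1; ext ω
        unfold kerV
        rw [← integral_indicator measurableSet_Ioi]
        rfl
    _ = ∫ u, ∫ ω, S.indicator (fun p => K p.2) (ω, u) ∂μ := integral_integral_swap hF
    _ = ∫ u, K u * μ.real {ω | a ω < u} := by
        congr 1; ext u
        rw [mul_comm, ← smul_eq_mul,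
          ← integral_indicator_const _ (measurableSet_lt ha measurable_const)]
        rfl

theorem integral_one_div_mul_integral_Ioi_kernel {α : Type*} [MeasurableSpace α]
    {μ : Measure α} [IsFiniteMeasure μ] {K : ℝ → ℝ} (hK : Integrable K) {Y : α → ℝ}
    (hY : Measurable Y) {h : ℝ} (hh : 0 < h) (c : ℝ) :
    ∫ ω, 1 / h * (∫ z in Ioi c, K ((z - Y ω) / h)) ∂μ
      = ∫ u, K u * μ.real {ω | c - h * u < Y ω} := by
  simp_rw [one_div_mul_integral_Ioi_comp_sub_div K hh]
  rw [integral_kerV_comp (a := fun ω => (c - Y ω) / h) hK (by fun_prop)]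
  congr 1; ext u
  congr 2; ext ω
  rw [mem_ofPred_eq, mem_ofPred_eq, div_lt_iff₀ hh, mul_comm, sub_lt_comm]

section Density

variable {α : Type*} [MeasurableSpace α] {μ : Measure α} {X : α → ℝ} {f : ℝ → ℝ}

theorem integrable_of_map_eq_withDensity [IsFiniteMeasure μ] (hf : AEStronglyMeasurable f)
    (hf0 : ∀ x, 0 ≤ f x) (hdens : μ.map X = volume.withDensity fun x => ENNReal.ofReal (f x)) :
    Integrable f := by
  refine ⟨hf, ?_⟩
  rw [hasFiniteIntegral_iff_ofReal (ae_of_all _ hf0)]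
  have := measure_lt_top (μ.map X) univ
  rwa [hdens, withDensity_apply _ MeasurableSet.univ, Measure.restrict_univ] at this

theorem measureReal_lt_eq_integral_Ioi (hX : Measurable X) (hf : Integrable f)
    (hf0 : ∀ x, 0 ≤ f x) (hdens : μ.map X = volume.withDensity fun x => ENNReal.ofReal (f x))
    (r : ℝ) : μ.real {ω | r < X ω} = ∫ x in Ioi r, f x := by
  rw [measureReal_def, show {ω | r < X ω} = X ⁻¹' Ioi r from rfl,
    ← Measure.map_apply hX measurableSet_Ioi, hdens, withDensity_apply _ measurableSet_Ioi,
    ← ofReal_integral_eq_lintegral_ofReal hf.integrableOn (ae_of_all _ hf0),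
    ENNReal.toReal_ofReal (setIntegral_nonneg measurableSet_Ioi fun x _ => hf0 x)]

theorem measureReal_lt_comp_eq_of_strictMono {Ω : Set ℝ} {g gInv : ℝ → ℝ} (hg : StrictMono g)
    (hgInv : ∀ s ∈ Ω, g (gInv s) = s) (hXΩ : ∀ᵐ ω ∂μ, X ω ∈ Ω) (s : ℝ) :
    μ.real {ω | s < gInv (X ω)} = μ.real {ω | g s < X ω} := by
  refine measureReal_congr ?_
  filter_upwards [hXΩ] with ω hω
  change (s < gInv (X ω)) = (g s < X ω)
  rw [← hg.lt_iff_lt, hgInv _ hω]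

end Density

theorem bias_survival_estimator_one_general
    {α : Type*} [MeasurableSpace α] (μ : Measure α) [IsProbabilityMeasure μ]
    -- C1: the kernel
    (K : ℝ → ℝ)
    (hK_symm : ∀ x, K (-x) = K x) (hK_one : (∫ x, K x) = 1)
    (hK_mom2 : Integrable (fun x => x ^ 2 * K x))
    -- C3, C4: the transformation
    (Ω : Set ℝ)
    (g gInv fX : ℝ → ℝ)
    (hg_smooth : ContDiff ℝ 2 g) (hg_mono : StrictMono g)
    (hgInv_right : ∀ s ∈ Ω, g (gInv s) = s)
    (hgInv_meas : Measurable gInv)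
    -- the random variable and its density
    (X : α → ℝ) (hX : Measurable X) (hXΩ : ∀ᵐ ω ∂μ, X ω ∈ Ω)
    (hfX_smooth : ContDiff ℝ 2 fX) (hfX_nonneg : ∀ x, 0 ≤ fX x)
    (hdens : μ.map X = volume.withDensity (fun x => ENNReal.ofReal (fX x)))
    -- the point of evaluation
    (t : ℝ) (ht : t ∈ Ω)
    :
    (fun h : ℝ =>
        (∫ ω, (1 / h) *
            (∫ z in Set.Ioi (gInv t), K ((z - gInv (X ω)) / h)) ∂μ)
          - survival μ X t
          + h ^ 2 / 2 *
              (deriv (deriv g) (gInv t) * fX t +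
                (deriv g (gInv t)) ^ 2 * deriv fX t) *
              ∫ y, y ^ 2 * K y)
      =o[nhdsWithin (0 : ℝ) (Set.Ioi 0)] (fun h => h ^ 2) := by
  set y₀ := gInv t
  set fY : ℝ → ℝ := fun y => deriv g y * fX (g y)
  set S_Y : ℝ → ℝ := fun s => μ.real {ω | s < gInv (X ω)}
  have hK : Integrable K := .of_integral_ne_zero (by simp [hK_one])
  have hfX_int : Integrable fX := integrable_of_map_eq_withDensity
    hfX_smooth.continuous.aestronglyMeasurable hfX_nonneg hdens
  have hS_Y : ∀ s, S_Y s = ∫ x in Ioi (g s), fX x := fun s =>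
    (measureReal_lt_comp_eq_of_strictMono hg_mono hgInv_right hXΩ s).trans
      (measureReal_lt_eq_integral_Ioi hX hfX_int hfX_nonneg hdens _)
  have hS_Y_deriv : ∀ s, HasDerivAt S_Y (-fY s) s := fun s => by
    rw [show S_Y = _ from funext hS_Y]
    exact ((hasDerivAt_integral_Ioi hfX_int hfX_smooth.continuous.continuousAt).comp s
      (hg_smooth.differentiable (by norm_num) s).hasDerivAt).congr_deriv
        (by simp only [fY]; ring)
  have hfY_deriv : HasDerivAt fY
      (deriv (deriv g) y₀ * fX t + deriv g y₀ ^ 2 * deriv fX t) y₀ := by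
    have hgy₀ : g y₀ = t := hgInv_right t ht
    exact ((hg_smooth.differentiable_deriv_two y₀).hasDerivAt.mul
      (((hfX_smooth.differentiable (by norm_num) (g y₀)).hasDerivAt).comp y₀
        (hg_smooth.differentiable (by norm_num) y₀).hasDerivAt)).congr_deriv
        (by simp only [Function.comp_apply, hgy₀]; ring)
  have hsurv : survival μ X t = S_Y y₀ := by
    rw [hS_Y, hgInv_right t ht]
    exact measureReal_lt_eq_integral_Ioi hX hfX_int hfX_nonneg hdens t
  have hbias := isLittleO_kernel_smoothing_bias hK_one hK_symm hK_mom2 hS_Y_deriv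
    hfY_deriv.neg ⟨1, fun y => by
      rw [abs_of_nonneg measureReal_nonneg]; exact measureReal_le_one⟩
  refine (hbias.mono nhdsWithin_le_nhds).congr' ?_ EventuallyEq.rfl
  filter_upwards [self_mem_nhdsWithin] with h hh
  rw [integral_one_div_mul_integral_Ioi_kernel (Y := fun ω => gInv (X ω)) hK (by fun_prop) hh,
    hsurv]
  ring

/-- Bias expansion of the first proposed survival function estimator
`S̃_{X,1}(t)`:  as `h → 0⁺`,
`E[S̃_{X,1}(t)] − S_X(t) = −(h²/2) b₁(t) ∫ y² K(y) dy + o(h²)`, where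
`b₁(t) = g″(g⁻¹ t) f_X(t) + (g′(g⁻¹ t))² f_X′(t)`. -/
theorem bias_survival_estimator_one
    {α : Type*} [MeasurableSpace α] (μ : Measure α) [IsProbabilityMeasure μ]
    -- C1: the kernel
    (K : ℝ → ℝ) (hK_cont : Continuous K) (hK_nonneg : ∀ x, 0 ≤ K x)
    (hK_symm : ∀ x, K (-x) = K x) (hK_one : (∫ x, K x) = 1)
    (hK_mom2 : Integrable (fun x => x ^ 2 * K x))
    -- C3, C4: the transformation
    (Ω : Set ℝ) (hΩ : Set.OrdConnected Ω)
    (g gInv fX : ℝ → ℝ)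
    (hg_smooth : ContDiff ℝ 2 g) (hg_mono : StrictMono g)
    (hg_range : Set.range g = Ω)
    (hgInv_left : Function.LeftInverse gInv g)
    (hgInv_right : ∀ s ∈ Ω, g (gInv s) = s)
    (hgInv_meas : Measurable gInv)
    -- the random variable and its density
    (X : α → ℝ) (hX : Measurable X) (hXΩ : ∀ᵐ ω ∂μ, X ω ∈ Ω)
    (hfX_smooth : ContDiff ℝ 2 fX) (hfX_nonneg : ∀ x, 0 ≤ fX x)
    (hdens : μ.map X = volume.withDensity (fun x => ENNReal.ofReal (fX x)))
    -- C4: the density f_Y(y) = g′(y) f_X(g(y)) of Y = g⁻¹(X) is twice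
    -- continuously differentiable with bounded second derivative
    (hfY_smooth : ContDiff ℝ 2 (fun y => deriv g y * fX (g y)))
    (hfY_bdd : ∃ C : ℝ, ∀ y,
      |deriv (deriv (fun z => deriv g z * fX (g z))) y| ≤ C)
    -- C5
    (hgK : ∃ ε > (0 : ℝ), ∀ u : ℝ, |u| < ε →
      Integrable (fun x => deriv g (u * x) * K x))
    (hgV : ∃ ε > (0 : ℝ), ∀ u : ℝ, |u| < ε →
      Integrable (fun x => deriv g (u * x) * kerV K x))
    -- C6: moments
    (hM1 : Integrable X μ) (hM2 : Integrable (fun ω => (X ω) ^ 2) μ)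
    (hM3 : Integrable (fun ω => (X ω) ^ 3) μ)
    -- the point of evaluation
    (t : ℝ) (ht : t ∈ Ω)
    :
    (fun h : ℝ =>
        (∫ ω, (1 / h) *
            (∫ z in Set.Ioi (gInv t), K ((z - gInv (X ω)) / h)) ∂μ)
          - survival μ X t
          + h ^ 2 / 2 *
              (deriv (deriv g) (gInv t) * fX t +
                (deriv g (gInv t)) ^ 2 * deriv fX t) *
              ∫ y, y ^ 2 * K y)
      =o[nhdsWithin (0 : ℝ) (Set.Ioi 0)] (fun h => h ^ 2) :=
  bias_survival_estimator_one_general μ K hK_symm hK_one hK_mom2 Ω g gInv fX hg_smooth hg_mono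
    hgInv_right hgInv_meas X hX hXΩ hfX_smooth hfX_nonneg hdens t ht
end

section
/- Suppose ω′ = inf Ω is finite. For any fixed sample values X₁,…,Xₙ ∈ Ω and any bandwidth h > 0, the second proposed mean residual life estimator m̃_{X,2}(t) = 𝕊̃_{X,2}(t)/S̃_{X,2}(t) satisfies lim_{t → ω′⁺} m̃_{X,2}(t) + ω′ = X̄, where X̄ = (1/n) Σ_{i=1}^n Xᵢ is the sample mean. In particular, lim_{t → ω′⁺} S̃_{X,2}(t) = 1 and lim_{t → ω′⁺} 𝕊̃_{X,2}(t) = X̄ − ω′. -/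
/-!
Since `g⁻¹(t) → −∞` as `t → ω′⁺`, every kernel term `V((g⁻¹(t) − c)/h)` tends to
`V(−∞) = ∫ K = 1`. By dominated convergence, with the integrable majorant `|g′|` (the
tail identity for `g′` forces integrability on each half-line), each summand of `𝕊̃_{X,2}`
then tends to `∫_{−∞}^{g⁻¹(Xᵢ)} g′ = Xᵢ − ω′`. Averaging gives both limits, and their
quotient gives the one for `m̃_{X,2}`.
-/

open MeasureTheory Filter Topology

section kerV

variable {K : ℝ → ℝ}

lemma kerV_nonneg (hK_nonneg : ∀ x, 0 ≤ K x) (x : ℝ) : 0 ≤ kerV K x :=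
  setIntegral_nonneg measurableSet_Ioi fun z _ => hK_nonneg z

lemma kerV_le_integral (hK_nonneg : ∀ x, 0 ≤ K x) (hK_int : Integrable K) (x : ℝ) :
    kerV K x ≤ ∫ z, K z :=
  setIntegral_le_integral hK_int (ae_of_all _ hK_nonneg)

lemma kerV_antitone (hK_nonneg : ∀ x, 0 ≤ K x) (hK_int : Integrable K) : Antitone (kerV K) :=
  fun _ _ hab => setIntegral_mono_set hK_int.integrableOn (ae_of_all _ hK_nonneg)
    (Set.Ioi_subset_Ioi hab).eventuallyLE

lemma tendsto_kerV_atBot (hK_int : Integrable K) :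
    Tendsto (kerV K) atBot (𝓝 (∫ z, K z)) := by
  have hUnion : ⋃ x : ℝᵒᵈ, Set.Ioi (OrderDual.ofDual x) = Set.univ := Set.iUnion_Ioi
  have h := tendsto_setIntegral_of_monotone (μ := volume) (f := K)
    (s := fun x : ℝᵒᵈ => Set.Ioi (OrderDual.ofDual x)) (fun _ => measurableSet_Ioi)
    (fun _ _ hxy => Set.Ioi_subset_Ioi hxy) hK_int.integrableOn
  rw [hUnion, Measure.restrict_univ] at h
  -- `atTop` on `ℝᵒᵈ` is `atBot` on `ℝ` by definition
  exact h

lemma tendsto_kerV_div_atBot (hK_int : Integrable K) {h : ℝ} (hh : 0 < h) (c : ℝ) :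
    Tendsto (fun x => kerV K ((x - c) / h)) atBot (𝓝 (∫ z, K z)) :=
  (tendsto_kerV_atBot hK_int).comp
    ((tendsto_atBot_add_const_right _ (-c) tendsto_id).atBot_div_const hh)

lemma tendsto_setIntegral_mul_kerV_atBot (hK_nonneg : ∀ x, 0 ≤ K x) (hK_int : Integrable K)
    {f : ℝ → ℝ} {s : Set ℝ} (hf : IntegrableOn f s) {h : ℝ} (hh : 0 < h) :
    Tendsto (fun x => ∫ z in s, f z * kerV K ((x - z) / h)) atBot
      (𝓝 ((∫ z in s, f z) * ∫ z, K z)) := by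
  rw [← integral_mul_const]
  have hV_meas : Measurable (kerV K) := (kerV_antitone hK_nonneg hK_int).measurable
  refine tendsto_integral_filter_of_dominated_convergence (fun z => ‖f z‖ * ∫ z, K z)
    (Eventually.of_forall fun x => hf.aestronglyMeasurable.mul
      (hV_meas.comp ((measurable_const.sub measurable_id).div_const h)).aestronglyMeasurable)
    (Eventually.of_forall fun x => ae_of_all _ fun z => ?_) (hf.norm.mul_const _)
    (ae_of_all _ fun z => (tendsto_kerV_div_atBot hK_int hh z).const_mul (f z))
  rw [norm_mul, Real.norm_of_nonneg (kerV_nonneg hK_nonneg _)]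
  exact mul_le_mul_of_nonneg_left (kerV_le_integral hK_nonneg hK_int _) (norm_nonneg _)

end kerV

-- If `f` were not integrable on `Iic y`, it would not be on `Iic (y + 1)` either, and both
-- integrals would be the junk value `0`, forcing `g y = g (y + 1)`.
lemma integrableOn_Iic_of_setIntegral_Iic_eq {f g : ℝ → ℝ} {c : ℝ} (hg : Function.Injective g)
    (hf : ∀ y, ∫ z in Set.Iic y, f z = g y - c) (y : ℝ) : IntegrableOn f (Set.Iic y) := by
  by_contra hy
  have hy' : ¬IntegrableOn f (Set.Iic (y + 1)) := fun h =>
    hy (h.mono_set (Set.Iic_subset_Iic.2 (by linarith)))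
  have hgy := hf y
  have hgy' := hf (y + 1)
  rw [integral_undef hy] at hgy
  rw [integral_undef hy'] at hgy'
  exact absurd (hg (by linarith)) (by linarith : y ≠ y + 1)

theorem mrl_estimator_two_boundary_mean_value_general
    (K : ℝ → ℝ) (hK_nonneg : ∀ x, 0 ≤ K x)
    (hK_one : (∫ x, K x) = 1)
    (Ω : Set ℝ)
    (ω' : ℝ)
    (g gInv : ℝ → ℝ)
    (hg_mono : StrictMono g)
    (hgInv_right : ∀ s ∈ Ω, g (gInv s) = s)
    -- `g⁻¹(t) → −∞` as `t → ω′⁺`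
    (hgInv_tendsto : Tendsto gInv (nhdsWithin ω' (Set.Ioi ω')) atBot)
    -- `∫_{−∞}^y g′(z) dz = g(y) − ω′` for every `y`
    (hg_deriv_int : ∀ y : ℝ, (∫ z in Set.Iic y, deriv g z) = g y - ω')
    (n : ℕ) (hn : 0 < n) (Xv : Fin n → ℝ) (hXv : ∀ i, Xv i ∈ Ω)
    (h : ℝ) (hh : 0 < h) :
    Tendsto (fun t =>
        (1 / (n : ℝ)) * ∑ i, kerV K ((gInv t - gInv (Xv i)) / h))
      (nhdsWithin ω' (Set.Ioi ω')) (nhds 1) ∧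
    Tendsto (fun t =>
        (1 / (n : ℝ)) * ∑ i, ∫ z in Set.Iic (gInv (Xv i)),
          deriv g z * kerV K ((gInv t - z) / h))
      (nhdsWithin ω' (Set.Ioi ω'))
      (nhds ((1 / (n : ℝ)) * (∑ i, Xv i) - ω')) ∧
    Tendsto (fun t =>
        ((1 / (n : ℝ)) * ∑ i, ∫ z in Set.Iic (gInv (Xv i)),
            deriv g z * kerV K ((gInv t - z) / h)) /
          ((1 / (n : ℝ)) * ∑ i, kerV K ((gInv t - gInv (Xv i)) / h)) + ω')
      (nhdsWithin ω' (Set.Ioi ω'))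
      (nhds ((1 / (n : ℝ)) * ∑ i, Xv i)) := by
  have hK_int : Integrable K := Integrable.of_integral_ne_zero (by rw [hK_one]; exact one_ne_zero)
  have hn' : (n : ℝ) ≠ 0 := Nat.cast_ne_zero.2 hn.ne'
  have hS_term (i : Fin n) : Tendsto (fun t => kerV K ((gInv t - gInv (Xv i)) / h))
      (nhdsWithin ω' (Set.Ioi ω')) (𝓝 1) :=
    hK_one ▸ (tendsto_kerV_div_atBot hK_int hh _).comp hgInv_tendsto
  have hSS_term (i : Fin n) : Tendsto (fun t => ∫ z in Set.Iic (gInv (Xv i)),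
      deriv g z * kerV K ((gInv t - z) / h)) (nhdsWithin ω' (Set.Ioi ω')) (𝓝 (Xv i - ω')) := by
    have := (tendsto_setIntegral_mul_kerV_atBot hK_nonneg hK_int
      (integrableOn_Iic_of_setIntegral_Iic_eq hg_mono.injective hg_deriv_int (gInv (Xv i))) hh).comp
      hgInv_tendsto
    rwa [hK_one, mul_one, hg_deriv_int, hgInv_right _ (hXv i)] at this
  have hS : Tendsto (fun t => (1 / (n : ℝ)) * ∑ i, kerV K ((gInv t - gInv (Xv i)) / h))
      (nhdsWithin ω' (Set.Ioi ω')) (𝓝 1) := by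
    convert (tendsto_finsetSum _ fun i _ => hS_term i).const_mul (1 / (n : ℝ)) using 2
    simp [hn']
  have hSS : Tendsto (fun t => (1 / (n : ℝ)) * ∑ i, ∫ z in Set.Iic (gInv (Xv i)),
      deriv g z * kerV K ((gInv t - z) / h))
      (nhdsWithin ω' (Set.Ioi ω')) (𝓝 ((1 / (n : ℝ)) * (∑ i, Xv i) - ω')) := by
    convert (tendsto_finsetSum _ fun i _ => hSS_term i).const_mul (1 / (n : ℝ)) using 2
    simp [Finset.sum_sub_distrib, mul_sub, hn']
  exact ⟨hS, hSS, by simpa using (hSS.div hS one_ne_zero).add_const ω'⟩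

/-- Boundary behaviour of the second proposed mean residual life estimator:
if `ω′ = inf Ω` is finite, then for any fixed sample `X₁, …, Xₙ ∈ Ω` and any
bandwidth `h > 0`, `lim_{t → ω′⁺} m̃_{X,2}(t) + ω′ = X̄`; in particular,
`lim_{t → ω′⁺} S̃_{X,2}(t) = 1` and `lim_{t → ω′⁺} 𝕊̃_{X,2}(t) = X̄ − ω′`. -/
theorem mrl_estimator_two_boundary_mean_value
    (K : ℝ → ℝ) (hK_cont : Continuous K) (hK_nonneg : ∀ x, 0 ≤ K x)
    (hK_symm : ∀ x, K (-x) = K x) (hK_one : (∫ x, K x) = 1)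
    (Ω : Set ℝ) (hΩ : Set.OrdConnected Ω)
    (ω' : ℝ) (hω' : IsGLB Ω ω')
    (g gInv : ℝ → ℝ)
    (hg_cont : Continuous g) (hg_mono : StrictMono g)
    (hg_range : Set.range g = Ω)
    (hgInv_left : Function.LeftInverse gInv g)
    (hgInv_right : ∀ s ∈ Ω, g (gInv s) = s)
    -- `g⁻¹(t) → −∞` as `t → ω′⁺`
    (hgInv_tendsto : Tendsto gInv (nhdsWithin ω' (Set.Ioi ω')) atBot)
    -- `∫_{−∞}^y g′(z) dz = g(y) − ω′` for every `y`
    (hg_deriv_int : ∀ y : ℝ, (∫ z in Set.Iic y, deriv g z) = g y - ω')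
    (n : ℕ) (hn : 0 < n) (Xv : Fin n → ℝ) (hXv : ∀ i, Xv i ∈ Ω)
    (h : ℝ) (hh : 0 < h) :
    Tendsto (fun t =>
        (1 / (n : ℝ)) * ∑ i, kerV K ((gInv t - gInv (Xv i)) / h))
      (nhdsWithin ω' (Set.Ioi ω')) (nhds 1) ∧
    Tendsto (fun t =>
        (1 / (n : ℝ)) * ∑ i, ∫ z in Set.Iic (gInv (Xv i)),
          deriv g z * kerV K ((gInv t - z) / h))
      (nhdsWithin ω' (Set.Ioi ω'))
      (nhds ((1 / (n : ℝ)) * (∑ i, Xv i) - ω')) ∧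
    Tendsto (fun t =>
        ((1 / (n : ℝ)) * ∑ i, ∫ z in Set.Iic (gInv (Xv i)),
            deriv g z * kerV K ((gInv t - z) / h)) /
          ((1 / (n : ℝ)) * ∑ i, kerV K ((gInv t - gInv (Xv i)) / h)) + ω')
      (nhdsWithin ω' (Set.Ioi ω'))
      (nhds ((1 / (n : ℝ)) * ∑ i, Xv i)) :=
  mrl_estimator_two_boundary_mean_value_general K hK_nonneg hK_one Ω ω' g gInv hg_mono hgInv_right
    hgInv_tendsto hg_deriv_int n hn Xv hXv h hh
end
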